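/- The homomorphisms ψ : G_{n+1}^2 → G_{n,d}^2 (ψ(a_{ij}) = a_{ij} for i,j ≤ n, ψ(a_{i(n+1)}) = τ_i) and ω : G_{n,d}^2 → Q (ω(a_{ij}) = a_{ij}, ω(τ_i) = a_{i(n+1)}) induce mutually inverse isomorphisms; hence G_{n,d}^2 ≅ G_{n+1}^2 / ⟨⟨[a_{i(n+1)}, a_{j(n+1)}]⟩⟩. -/

import Mathlib

abbrev GenG (n : ℕ) := {p : Fin n × Fin n // p.1 < p.2}

def relsG (n : ℕ) : Set (FreeGroup (GenG n)) :=
  {r | (∃ a : GenG n, r = .of a * .of a) ∨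
    (∃ a b : GenG n, ({a.1.1, a.1.2, b.1.1, b.1.2} : Finset (Fin n)).card = 4 ∧
      r = .of a * .of b * (.of b * .of a)⁻¹) ∨
    (∃ i j k : Fin n, ∃ hij : i < j, ∃ hik : i < k, ∃ hjk : j < k,
      r = .of ⟨(i,j),hij⟩ * .of ⟨(i,k),hik⟩ * .of ⟨(j,k),hjk⟩ *
          (.of ⟨(j,k),hjk⟩ * .of ⟨(i,k),hik⟩ * .of ⟨(i,j),hij⟩)⁻¹)}

abbrev G2 (n : ℕ) := PresentedGroup (relsG n)

abbrev GenD (n : ℕ) := GenG n ⊕ Fin n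

def relsD (n : ℕ) : Set (FreeGroup (GenD n)) :=
  {r | (∃ a : GenG n, r = .of (.inl a) * .of (.inl a)) ∨
    (∃ a b : GenG n, ({a.1.1, a.1.2, b.1.1, b.1.2} : Finset (Fin n)).card = 4 ∧
      r = .of (.inl a) * .of (.inl b) * (.of (.inl b) * .of (.inl a))⁻¹) ∨
    (∃ i j k : Fin n, ∃ hij : i < j, ∃ hik : i < k, ∃ hjk : j < k,
      r = .of (.inl ⟨(i,j),hij⟩) * .of (.inl ⟨(i,k),hik⟩) * .of (.inl ⟨(j,k),hjk⟩) *
          (.of (.inl ⟨(j,k),hjk⟩) * .of (.inl ⟨(i,k),hik⟩) * .of (.inl ⟨(i,j),hij⟩))⁻¹) ∨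
    (∃ i : Fin n, r = .of (.inr i) * .of (.inr i)) ∨
    (∃ i j : Fin n, i ≠ j ∧ r = .of (.inr i) * .of (.inr j) * (.of (.inr j) * .of (.inr i))⁻¹) ∨
    (∃ i j : Fin n, ∃ h : i < j,
      r = .of (.inr i) * .of (.inr j) * .of (.inl ⟨(i,j),h⟩) * .of (.inr j) * .of (.inr i) *
          (.of (.inl ⟨(i,j),h⟩))⁻¹) ∨
    (∃ a : GenG n, ∃ k : Fin n, k ≠ a.1.1 ∧ k ≠ a.1.2 ∧
      r = .of (.inl a) * .of (.inr k) * (.of (.inr k) * .of (.inl a))⁻¹)}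

abbrev G2d (n : ℕ) := PresentedGroup (relsD n)

def embedGen (n : ℕ) (a : GenG n) : GenG (n+1) :=
  ⟨(a.1.1.castSucc, a.1.2.castSucc), Fin.castSucc_lt_castSucc_iff.mpr a.2⟩

def tauGen (n : ℕ) (i : Fin n) : GenG (n+1) := ⟨(i.castSucc, Fin.last n), Fin.castSucc_lt_last i⟩

def QRels (n : ℕ) : Set (G2 (n+1)) :=
  {x | ∃ i j : Fin n, i ≠ j ∧
    x = PresentedGroup.of (tauGen n i) * PresentedGroup.of (tauGen n j) *
        (PresentedGroup.of (tauGen n j) * PresentedGroup.of (tauGen n i))⁻¹}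

abbrev Qgrp (n : ℕ) := G2 (n+1) ⧸ Subgroup.normalClosure (QRels n)

/-!
Under the bijection of generating sets `a_ij ↦ a_ij`, `τ_i ↦ a_{i,n+1}`, the defining relations
of `G_{n,d}^2` and of `Q` correspond: squares go to squares, far commutativity of `a_ij` with
`a_{k,n+1}` is the relation `a_ij τ_k = τ_k a_ij`, and `τ_i τ_j = τ_j τ_i` is the relation
imposed in `Q`. The only pair that does not match literally is the triple relation
`a_ij a_{i,n+1} a_{j,n+1} = a_{j,n+1} a_{i,n+1} a_ij` against `τ_i τ_j a_ij τ_j τ_i = a_ij`;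
as `τ_i, τ_j` are commuting involutions, both say that `a_ij` commutes with `τ_i τ_j`. So `ψ`
and `ω` are well defined, and they are mutually inverse because they are so on generators.
-/

lemma Finset.card_eq_four_iff_nodup {α : Type*} [DecidableEq α] {a b c d : α} :
    ({a, b, c, d} : Finset α).card = 4 ↔ [a, b, c, d].Nodup := by
  rw [show ({a, b, c, d} : Finset α) = (([a, b, c, d] : List α) : Multiset α).toFinset by simp]
  exact Multiset.toFinset_card_eq_card_iff_nodup

lemma triple_rel_iff_conj_rel {G : Type*} [Group G] {x s t : G} (hs : s * s = 1)
    (ht : t * t = 1) (hst : Commute s t) :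
    x * s * t = t * s * x ↔ s * t * x * t * s = x := by
  have hts : t * s = (s * t)⁻¹ := by
    rw [mul_inv_rev, inv_eq_of_mul_eq_one_right hs, inv_eq_of_mul_eq_one_right ht]
  rw [show s * t * x * t * s = s * t * x * (t * s) by group, hts, mul_inv_eq_iff_eq_mul,
    ← hts, ← hst.eq, mul_assoc x, eq_comm]

def IsFar {m : ℕ} (p q : GenG m) : Prop :=
  ({p.1.1, p.1.2, q.1.1, q.1.2} : Finset (Fin m)).card = 4

lemma IsFar.symm {m : ℕ} {p q : GenG m} (h : IsFar p q) : IsFar q p := by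
  rw [IsFar, Finset.card_eq_four_iff_nodup] at h ⊢
  exact (List.perm_append_comm (l₁ := [p.1.1, p.1.2]) (l₂ := [q.1.1, q.1.2])).nodup_iff.mp h

namespace G2
variable {m : ℕ}

lemma of_mul_self (p : GenG m) : (.of p : G2 m) * .of p = 1 :=
  PresentedGroup.one_of_mem (rels := relsG m) (Or.inl ⟨p, rfl⟩)

lemma of_commute {p q : GenG m} (h : IsFar p q) : Commute (.of p : G2 m) (.of q) :=
  PresentedGroup.mk_eq_mk_of_mul_inv_mem (rels := relsG m) (Or.inr (Or.inl ⟨p, q, h, rfl⟩))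

lemma of_triple {i j k : Fin m} (hij : i < j) (hik : i < k) (hjk : j < k) :
    (.of ⟨(i, j), hij⟩ : G2 m) * .of ⟨(i, k), hik⟩ * .of ⟨(j, k), hjk⟩ =
      .of ⟨(j, k), hjk⟩ * .of ⟨(i, k), hik⟩ * .of ⟨(i, j), hij⟩ :=
  PresentedGroup.mk_eq_mk_of_mul_inv_mem (rels := relsG m)
    (Or.inr (Or.inr ⟨i, j, k, hij, hik, hjk, rfl⟩))

end G2

namespace G2d
variable {n : ℕ}

lemma inl_mul_self (a : GenG n) : (.of (.inl a) : G2d n) * .of (.inl a) = 1 :=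
  PresentedGroup.one_of_mem (rels := relsD n) (Or.inl ⟨a, rfl⟩)

lemma inl_commute {a b : GenG n} (h : IsFar a b) :
    Commute (.of (.inl a) : G2d n) (.of (.inl b)) :=
  PresentedGroup.mk_eq_mk_of_mul_inv_mem (rels := relsD n)
    (Or.inr (Or.inl ⟨a, b, h, rfl⟩))

lemma inl_triple {i j k : Fin n} (hij : i < j) (hik : i < k) (hjk : j < k) :
    (.of (.inl ⟨(i, j), hij⟩) : G2d n) * .of (.inl ⟨(i, k), hik⟩) * .of (.inl ⟨(j, k), hjk⟩) =
      .of (.inl ⟨(j, k), hjk⟩) * .of (.inl ⟨(i, k), hik⟩) * .of (.inl ⟨(i, j), hij⟩) :=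
  PresentedGroup.mk_eq_mk_of_mul_inv_mem (rels := relsD n)
    (Or.inr (Or.inr (Or.inl ⟨i, j, k, hij, hik, hjk, rfl⟩)))

lemma inr_mul_self (i : Fin n) : (.of (.inr i) : G2d n) * .of (.inr i) = 1 :=
  PresentedGroup.one_of_mem (rels := relsD n) (Or.inr (Or.inr (Or.inr (Or.inl ⟨i, rfl⟩))))

lemma inr_commute {i j : Fin n} (h : i ≠ j) : Commute (.of (.inr i) : G2d n) (.of (.inr j)) :=
  PresentedGroup.mk_eq_mk_of_mul_inv_mem (rels := relsD n)
    (Or.inr (Or.inr (Or.inr (Or.inr (Or.inl ⟨i, j, h, rfl⟩)))))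

lemma inr_inr_inl_conj {i j : Fin n} (h : i < j) :
    (.of (.inr i) : G2d n) * .of (.inr j) * .of (.inl ⟨(i, j), h⟩) * .of (.inr j) * .of (.inr i) =
      .of (.inl ⟨(i, j), h⟩) :=
  PresentedGroup.mk_eq_mk_of_mul_inv_mem (rels := relsD n)
    (Or.inr (Or.inr (Or.inr (Or.inr (Or.inr (Or.inl ⟨i, j, h, rfl⟩))))))

lemma inl_inr_commute {a : GenG n} {k : Fin n} (h₁ : k ≠ a.1.1) (h₂ : k ≠ a.1.2) :
    Commute (.of (.inl a) : G2d n) (.of (.inr k)) :=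
  PresentedGroup.mk_eq_mk_of_mul_inv_mem (rels := relsD n)
    (Or.inr (Or.inr (Or.inr (Or.inr (Or.inr (Or.inr ⟨a, k, h₁, h₂, rfl⟩))))))

end G2d

section Generators
variable {n : ℕ}

lemma embedGen_ne_tauGen (a : GenG n) (i : Fin n) : embedGen n a ≠ tauGen n i :=
  fun h => Fin.castSucc_ne_last a.1.2 (congrArg (·.1.2) h)

lemma embedGen_injective : Function.Injective (embedGen n) := by
  intro a b h
  simp only [embedGen, Subtype.mk.injEq, Prod.mk.injEq, Fin.castSucc_inj] at h
  exact Subtype.ext (Prod.ext h.1 h.2)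

lemma tauGen_injective : Function.Injective (tauGen n) := by
  intro i j h
  simpa [tauGen] using h

lemma embedGen_mk {i j : Fin n} (h : i.castSucc < j.castSucc) :
    (⟨(i.castSucc, j.castSucc), h⟩ : GenG (n + 1)) =
      embedGen n ⟨(i, j), Fin.castSucc_lt_castSucc_iff.mp h⟩ := rfl

lemma tauGen_mk {i : Fin n} (h : i.castSucc < Fin.last n) :
    (⟨(i.castSucc, Fin.last n), h⟩ : GenG (n + 1)) = tauGen n i := rfl

lemma embedGen_or_tauGen (p : GenG (n + 1)) :
    (∃ a, embedGen n a = p) ∨ ∃ i, tauGen n i = p := by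
  obtain ⟨⟨i, j⟩, hij⟩ := p
  obtain ⟨i, rfl⟩ := Fin.exists_castSucc_eq.mpr (Fin.ne_last_of_lt hij)
  rcases Fin.eq_castSucc_or_eq_last j with ⟨j, rfl⟩ | rfl
  · exact .inl ⟨_, (embedGen_mk hij).symm⟩
  · exact .inr ⟨i, rfl⟩

noncomputable def genDEquivGenG (n : ℕ) : GenD n ≃ GenG (n + 1) :=
  Equiv.ofBijective (Sum.elim (embedGen n) (tauGen n))
    ⟨embedGen_injective.sumElim tauGen_injective embedGen_ne_tauGen, fun p => by
      rcases embedGen_or_tauGen p with ⟨a, rfl⟩ | ⟨i, rfl⟩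
      exacts [⟨.inl a, rfl⟩, ⟨.inr i, rfl⟩]⟩

@[simp] lemma genDEquivGenG_inl (a : GenG n) : genDEquivGenG n (.inl a) = embedGen n a := rfl

@[simp] lemma genDEquivGenG_inr (i : Fin n) : genDEquivGenG n (.inr i) = tauGen n i := rfl

@[simp] lemma genDEquivGenG_symm_embedGen (a : GenG n) :
    (genDEquivGenG n).symm (embedGen n a) = .inl a :=
  (Equiv.symm_apply_eq _).mpr rfl

@[simp] lemma genDEquivGenG_symm_tauGen (i : Fin n) :
    (genDEquivGenG n).symm (tauGen n i) = .inr i :=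
  (Equiv.symm_apply_eq _).mpr rfl

lemma isFar_embedGen_iff {a b : GenG n} : IsFar (embedGen n a) (embedGen n b) ↔ IsFar a b := by
  simp only [IsFar, Finset.card_eq_four_iff_nodup, embedGen]
  simp

lemma isFar_embedGen_tauGen_iff {a : GenG n} {k : Fin n} :
    IsFar (embedGen n a) (tauGen n k) ↔ k ≠ a.1.1 ∧ k ≠ a.1.2 := by
  simp only [IsFar, Finset.card_eq_four_iff_nodup, embedGen, tauGen]
  simp [a.2.ne, eq_comm]

lemma not_isFar_tauGen (i j : Fin n) : ¬ IsFar (tauGen n i) (tauGen n j) := by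
  rw [IsFar, Finset.card_eq_four_iff_nodup]
  simp [tauGen]

end Generators

namespace Qgrp
variable {n : ℕ}

lemma mk_of_mul_self (p : GenG (n + 1)) :
    (QuotientGroup.mk (.of p) : Qgrp n) * QuotientGroup.mk (.of p) = 1 :=
  (congrArg (QuotientGroup.mk' _) (G2.of_mul_self p)).trans (map_one _)

lemma mk_of_commute {p q : GenG (n + 1)} (h : IsFar p q) :
    Commute (QuotientGroup.mk (.of p) : Qgrp n) (QuotientGroup.mk (.of q)) :=
  (G2.of_commute h).map (QuotientGroup.mk' _)

lemma mk_of_triple {i j k : Fin (n + 1)} (hij : i < j) (hik : i < k) (hjk : j < k) :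
    (QuotientGroup.mk (.of ⟨(i, j), hij⟩) : Qgrp n) * QuotientGroup.mk (.of ⟨(i, k), hik⟩) *
        QuotientGroup.mk (.of ⟨(j, k), hjk⟩) =
      QuotientGroup.mk (.of ⟨(j, k), hjk⟩) * QuotientGroup.mk (.of ⟨(i, k), hik⟩) *
        QuotientGroup.mk (.of ⟨(i, j), hij⟩) :=
  congrArg (QuotientGroup.mk' _) (G2.of_triple hij hik hjk)

lemma mk_of_tauGen_commute {i j : Fin n} (h : i ≠ j) :
    Commute (QuotientGroup.mk (.of (tauGen n i)) : Qgrp n) (QuotientGroup.mk (.of (tauGen n j))) :=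
  mul_inv_eq_one.mp <| (QuotientGroup.eq_one_iff _).mpr <|
    Subgroup.subset_normalClosure ⟨i, j, h, rfl⟩

end Qgrp

section Homomorphisms
variable {n : ℕ}

noncomputable def omegaGen (n : ℕ) (x : GenD n) : Qgrp n :=
  QuotientGroup.mk (.of (genDEquivGenG n x))

noncomputable def psiGen (n : ℕ) (p : GenG (n + 1)) : G2d n :=
  .of ((genDEquivGenG n).symm p)

lemma lift_omegaGen_eq_one : ∀ r ∈ relsD n, FreeGroup.lift (omegaGen n) r = 1 := by
  rintro r (⟨a, rfl⟩ | ⟨a, b, h, rfl⟩ | ⟨i, j, k, hij, hik, hjk, rfl⟩ | ⟨i, rfl⟩ |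
    ⟨i, j, h, rfl⟩ | ⟨i, j, h, rfl⟩ | ⟨a, k, h₁, h₂, rfl⟩) <;>
    simp only [map_mul, map_inv, FreeGroup.lift_apply_of, mul_inv_eq_one, omegaGen,
      genDEquivGenG_inl, genDEquivGenG_inr]
  · exact Qgrp.mk_of_mul_self _
  · exact Qgrp.mk_of_commute (isFar_embedGen_iff.mpr h)
  · exact Qgrp.mk_of_triple (Fin.castSucc_lt_castSucc_iff.mpr hij)
      (Fin.castSucc_lt_castSucc_iff.mpr hik) (Fin.castSucc_lt_castSucc_iff.mpr hjk)
  · exact Qgrp.mk_of_mul_self _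
  · exact Qgrp.mk_of_tauGen_commute h
  · exact (triple_rel_iff_conj_rel (Qgrp.mk_of_mul_self _) (Qgrp.mk_of_mul_self _)
      (Qgrp.mk_of_tauGen_commute h.ne)).mp
      (Qgrp.mk_of_triple (Fin.castSucc_lt_castSucc_iff.mpr h) (Fin.castSucc_lt_last i)
        (Fin.castSucc_lt_last j))
  · exact Qgrp.mk_of_commute (isFar_embedGen_tauGen_iff.mpr ⟨h₁, h₂⟩)

@[simp] lemma psiGen_embedGen (a : GenG n) : psiGen n (embedGen n a) = .of (.inl a) := by
  simp [psiGen]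

@[simp] lemma psiGen_tauGen (i : Fin n) : psiGen n (tauGen n i) = .of (.inr i) := by
  simp [psiGen]

lemma psiGen_mul_self (p : GenG (n + 1)) : psiGen n p * psiGen n p = 1 := by
  rcases embedGen_or_tauGen p with ⟨a, rfl⟩ | ⟨i, rfl⟩
  · simpa using G2d.inl_mul_self a
  · simpa using G2d.inr_mul_self i

lemma psiGen_commute {p q : GenG (n + 1)} (h : IsFar p q) :
    Commute (psiGen n p) (psiGen n q) := by
  rcases embedGen_or_tauGen p with ⟨a, rfl⟩ | ⟨i, rfl⟩ <;>
    rcases embedGen_or_tauGen q with ⟨b, rfl⟩ | ⟨j, rfl⟩ <;>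
    simp only [psiGen_embedGen, psiGen_tauGen]
  · exact G2d.inl_commute (isFar_embedGen_iff.mp h)
  · obtain ⟨h₁, h₂⟩ := isFar_embedGen_tauGen_iff.mp h
    exact G2d.inl_inr_commute h₁ h₂
  · obtain ⟨h₁, h₂⟩ := isFar_embedGen_tauGen_iff.mp h.symm
    exact (G2d.inl_inr_commute h₁ h₂).symm
  · exact absurd h (not_isFar_tauGen i j)

lemma psiGen_triple {i j k : Fin (n + 1)} (hij : i < j) (hik : i < k) (hjk : j < k) :
    psiGen n ⟨(i, j), hij⟩ * psiGen n ⟨(i, k), hik⟩ * psiGen n ⟨(j, k), hjk⟩ =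
      psiGen n ⟨(j, k), hjk⟩ * psiGen n ⟨(i, k), hik⟩ * psiGen n ⟨(i, j), hij⟩ := by
  obtain ⟨i, rfl⟩ := Fin.exists_castSucc_eq.mpr (Fin.ne_last_of_lt hij)
  obtain ⟨j, rfl⟩ := Fin.exists_castSucc_eq.mpr (Fin.ne_last_of_lt hjk)
  rcases Fin.eq_castSucc_or_eq_last k with ⟨k, rfl⟩ | rfl
  · simp only [embedGen_mk, psiGen_embedGen]
    exact G2d.inl_triple _ _ _
  · have hij' := Fin.castSucc_lt_castSucc_iff.mp hij
    simp only [embedGen_mk, tauGen_mk, psiGen_embedGen, psiGen_tauGen]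
    exact (triple_rel_iff_conj_rel (G2d.inr_mul_self i) (G2d.inr_mul_self j)
      (G2d.inr_commute hij'.ne)).mpr (G2d.inr_inr_inl_conj hij')

lemma lift_psiGen_eq_one : ∀ r ∈ relsG (n + 1), FreeGroup.lift (psiGen n) r = 1 := by
  rintro r (⟨p, rfl⟩ | ⟨p, q, h, rfl⟩ | ⟨i, j, k, hij, hik, hjk, rfl⟩) <;>
    simp only [map_mul, map_inv, FreeGroup.lift_apply_of, mul_inv_eq_one]
  exacts [psiGen_mul_self p, psiGen_commute h, psiGen_triple hij hik hjk]

noncomputable def omegaHom (n : ℕ) : G2d n →* Qgrp n := PresentedGroup.toGroup lift_omegaGen_eq_one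

noncomputable def psiHom (n : ℕ) : G2 (n + 1) →* G2d n := PresentedGroup.toGroup lift_psiGen_eq_one

lemma normalClosure_QRels_le_ker_psiHom : Subgroup.normalClosure (QRels n) ≤ (psiHom n).ker := by
  refine Subgroup.normalClosure_le_normal ?_
  rintro _ ⟨i, j, h, rfl⟩
  simp only [SetLike.mem_coe, MonoidHom.mem_ker, map_mul, map_inv, mul_inv_eq_one, psiHom,
    PresentedGroup.toGroup.of, psiGen_tauGen]
  exact G2d.inr_commute h

noncomputable def psiBar (n : ℕ) : Qgrp n →* G2d n :=
  QuotientGroup.lift _ (psiHom n) normalClosure_QRels_le_ker_psiHom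

lemma omegaHom_of (x : GenD n) : omegaHom n (.of x) = QuotientGroup.mk (.of (genDEquivGenG n x)) :=
  PresentedGroup.toGroup.of _

lemma psiBar_mk_of (p : GenG (n + 1)) :
    psiBar n (QuotientGroup.mk (.of p)) = .of ((genDEquivGenG n).symm p) :=
  PresentedGroup.toGroup.of lift_psiGen_eq_one

lemma psiBar_comp_omegaHom : (psiBar n).comp (omegaHom n) = .id _ :=
  PresentedGroup.ext fun x => by simp [omegaHom_of, psiBar_mk_of]

lemma omegaHom_comp_psiBar : (omegaHom n).comp (psiBar n) = .id _ :=
  QuotientGroup.monoidHom_ext _ <| PresentedGroup.ext fun p => by simp [omegaHom_of, psiBar_mk_of]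

end Homomorphisms

theorem psi_omega_iso (n : ℕ) :
    ∃ e : G2d n ≃* Qgrp n,
      (∀ a : GenG n, e (PresentedGroup.of (Sum.inl a)) =
        QuotientGroup.mk (PresentedGroup.of (embedGen n a))) ∧
      (∀ i : Fin n, e (PresentedGroup.of (Sum.inr i)) =
        QuotientGroup.mk (PresentedGroup.of (tauGen n i))) ∧
      (∀ a : GenG n, e.symm (QuotientGroup.mk (PresentedGroup.of (embedGen n a))) =
        PresentedGroup.of (Sum.inl a)) ∧
      (∀ i : Fin n, e.symm (QuotientGroup.mk (PresentedGroup.of (tauGen n i))) =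
        PresentedGroup.of (Sum.inr i)) :=
  ⟨(omegaHom n).toMulEquiv (psiBar n) psiBar_comp_omegaHom omegaHom_comp_psiBar,
    fun a => omegaHom_of (.inl a), fun i => omegaHom_of (.inr i),
    fun a => (psiBar_mk_of _).trans (congrArg _ (genDEquivGenG_symm_embedGen a)),
    fun i => (psiBar_mk_of _).trans (congrArg _ (genDEquivGenG_symm_tauGen i))⟩
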